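/- (Proposition 2) Let E be a real Hilbert space, N(f) = f / ‖f‖ the normalization map, and L : E → ℝ differentiable at f̂ = f / ‖f‖ for some f ≠ 0. If the gradient g = ∇(L ∘ N)(f) is nonzero and the learning rate η is nonzero, then the SGD update strictly increases the norm of the embedding: ‖f − η • g‖ > ‖f‖. -/

import Mathlib

open RealInnerProductSpace Gradient

/-! The normalization map is constant along open rays, hence so is `L ∘ N`; differentiating
`t ↦ (L ∘ N) (t • f)` at `t = 1` shows that the gradient `g` is orthogonal to `f`, and then
`‖f - η • g‖² = ‖f‖² + η² ‖g‖²` by Pythagoras. -/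

section Homogeneous

variable {E F : Type*} [NormedAddCommGroup E] [NormedSpace ℝ E]
  [NormedAddCommGroup F] [NormedSpace ℝ F]

theorem inv_norm_smul_smul_of_pos (x : E) {t : ℝ} (ht : 0 < t) :
    ‖t • x‖⁻¹ • (t • x) = ‖x‖⁻¹ • x := by
  rw [norm_smul, Real.norm_of_nonneg ht.le, smul_smul, mul_inv, mul_right_comm,
    inv_mul_cancel₀ ht.ne', one_mul]

/-- Euler's identity in degree zero; it also holds where `φ` is not differentiable, through the
junk value `fderiv ℝ φ x = 0`. -/
theorem fderiv_apply_self_eq_zero_of_smul_invariant {φ : E → F} {x : E}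
    (hφ : ∀ t : ℝ, 0 < t → φ (t • x) = φ x) : fderiv ℝ φ x x = 0 := by
  by_cases hdiff : DifferentiableAt ℝ φ x
  · have hray : HasDerivAt (fun t : ℝ => t • x) x 1 := by
      simpa using (hasDerivAt_id (1 : ℝ)).smul_const x
    have hcomp : HasDerivAt (fun t : ℝ => φ (t • x)) (fderiv ℝ φ x x) 1 := by
      have hφ' : HasFDerivAt φ (fderiv ℝ φ x) ((1 : ℝ) • x) := by
        rw [one_smul]
        exact hdiff.hasFDerivAt
      exact hφ'.comp_hasDerivAt (1 : ℝ) hray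
    have hconst : HasDerivAt (fun t : ℝ => φ (t • x)) 0 1 := by
      refine (hasDerivAt_const (1 : ℝ) (φ x)).congr_of_eventuallyEq ?_
      filter_upwards [Ioi_mem_nhds one_pos] with t ht using hφ t ht
    exact hcomp.unique hconst
  · simp [fderiv_zero_of_not_differentiableAt hdiff]

end Homogeneous

section InnerProduct

variable {E : Type*} [NormedAddCommGroup E] [InnerProductSpace ℝ E]

theorem inner_gradient_self_eq_zero_of_smul_invariant [CompleteSpace E] {φ : E → ℝ} {x : E}
    (hφ : ∀ t : ℝ, 0 < t → φ (t • x) = φ x) : ⟪∇ φ x, x⟫ = 0 := by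
  rw [gradient, InnerProductSpace.toDual_symm_apply]
  exact fderiv_apply_self_eq_zero_of_smul_invariant hφ

theorem norm_lt_norm_sub_of_inner_eq_zero {x y : E} (hxy : ⟪x, y⟫ = 0) (hy : y ≠ 0) :
    ‖x‖ < ‖x - y‖ := by
  have hsq : ‖x - y‖ * ‖x - y‖ = ‖x‖ * ‖x‖ + ‖y‖ * ‖y‖ :=
    norm_sub_sq_eq_norm_sq_add_norm_sq_real hxy
  have hy' : 0 < ‖y‖ := norm_pos_iff.mpr hy
  nlinarith [norm_nonneg x, norm_nonneg (x - y)]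

end InnerProduct

theorem sgd_update_norm_strict_increase_general
    {E : Type*} [NormedAddCommGroup E] [InnerProductSpace ℝ E] [CompleteSpace E]
    (N : E → E) (hN : ∀ g : E, N g = ‖g‖⁻¹ • g)
    (L : E → ℝ) (f : E)
    (g : E) (hg : g = ∇ (L ∘ N) f) (hg0 : g ≠ 0)
    (η : ℝ) (hη : η ≠ 0) :
    ‖f‖ < ‖f - η • g‖ := by
  have hinvariant : ∀ t : ℝ, 0 < t → (L ∘ N) (t • f) = (L ∘ N) f := fun t ht => by
    simp only [Function.comp_apply, hN, inv_norm_smul_smul_of_pos f ht]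
  have horth : ⟪f, η • g⟫ = 0 := by
    rw [real_inner_smul_right, real_inner_comm, hg,
      inner_gradient_self_eq_zero_of_smul_invariant hinvariant, mul_zero]
  exact norm_lt_norm_sub_of_inner_eq_zero horth (smul_ne_zero hη hg0)

/-- Proposition 2 of the paper: for the loss composed with the normalization
map `N(f) = f / ‖f‖`, if the gradient `g = ∇(L ∘ N)(f)` is nonzero and the
learning rate `η` is nonzero, then the SGD update strictly increases the norm
of the embedding: `‖f − η • g‖ > ‖f‖`. -/
theorem sgd_update_norm_strict_increase
    {E : Type*} [NormedAddCommGroup E] [InnerProductSpace ℝ E] [CompleteSpace E]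
    (N : E → E) (hN : ∀ g : E, N g = ‖g‖⁻¹ • g)
    (L : E → ℝ) (f : E) (hf : f ≠ 0)
    (hL : DifferentiableAt ℝ L (‖f‖⁻¹ • f))
    (g : E) (hg : g = ∇ (L ∘ N) f) (hg0 : g ≠ 0)
    (η : ℝ) (hη : η ≠ 0) :
    ‖f‖ < ‖f - η • g‖ :=
  sgd_update_norm_strict_increase_general N hN L f g hg hg0 η hη
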